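/- Suppose k ≥ τ·ln τ/(τ−1), 0 < r < 1/ln τ, and fix constants 0 < η₂ < η₃ < 1. Then ∑_{S=⌈n·η₂⌉}^{⌊n·η₃⌋} Φ_n(S) → 0 as n → ∞. -/

import Mathlib

open Filter Finset

/-- Domain size `d = n^α` of Model RB. -/
noncomputable def dRB (α : ℝ) (n : ℕ) : ℝ := (n : ℝ) ^ α

/-- `m = n · ln d`. -/
noncomputable def mRB (α : ℝ) (n : ℕ) : ℝ := (n : ℝ) * Real.log (dRB α n)

/-- `f_n(s) = 1 + (p/(1-p)) (s^k - d^{-k})/(1 - d^{-k})`. -/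
noncomputable def fRB (α p : ℝ) (k n : ℕ) (s : ℝ) : ℝ :=
  1 + (p / (1 - p)) * (s ^ k - dRB α n ^ (-(k : ℝ))) / (1 - dRB α n ^ (-(k : ℝ)))

/-- `B_n(S) = C(n,S) (1/d)^S (1-1/d)^{n-S}`. -/
noncomputable def BRB (α : ℝ) (n S : ℕ) : ℝ :=
  (n.choose S : ℝ) * (1 / dRB α n) ^ S * (1 - 1 / dRB α n) ^ (n - S)

/-- `W_n(S) = f_n(S/n)^{r m}`. -/
noncomputable def WRB (α p r : ℝ) (k n S : ℕ) : ℝ :=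
  fRB α p k n ((S : ℝ) / (n : ℝ)) ^ (r * mRB α n)

/-- `Φ_n(S) = B_n(S) W_n(S)`. -/
noncomputable def PhiRB (α p r : ℝ) (k n S : ℕ) : ℝ := BRB α n S * WRB α p r k n S

/-- `g(s) = -k(k-1)(1-s)s^{k-1}/2`. -/
noncomputable def gRB (k : ℕ) (s : ℝ) : ℝ :=
  -((k : ℝ) * ((k : ℝ) - 1)) * (1 - s) * s ^ (k - 1) / 2

/-- `η₁(n) = 1/d + λ/(n^{1-(k-1)α} ln d)`. -/
noncomputable def eta1 (α lam : ℝ) (k n : ℕ) : ℝ :=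
  1 / dRB α n + lam / ((n : ℝ) ^ (1 - ((k : ℝ) - 1) * α) * Real.log (dRB α n))

/-- First moment `E[X] = d^n (1-p)^{r m}`. -/
noncomputable def E1RB (α p r : ℝ) (n : ℕ) : ℝ := dRB α n ^ n * (1 - p) ^ (r * mRB α n)

/-- Second moment `E[X²]`. -/
noncomputable def E2RB (α p r : ℝ) (k n : ℕ) : ℝ :=
  ∑ S ∈ Finset.range (n + 1),
    dRB α n ^ n * (n.choose S : ℝ) * (dRB α n - 1) ^ (n - S) *
      ((1 - p) * ((S.choose k : ℝ) / (n.choose k : ℝ)) +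
        ((1 - p) ^ 2 - p * (1 - p) * dRB α n ^ (-(k : ℝ)) / (1 - dRB α n ^ (-(k : ℝ)))) *
          (1 - (S.choose k : ℝ) / (n.choose k : ℝ))) ^ (r * mRB α n)

/-!
For `s = S/n ∈ [η₂, 1]` the hypothesis on `k` gives `f_n(s) ≤ 1 + (τ - 1) s^k ≤ τ^s`, the second
step because `s ↦ log (τ^s - 1) - k log s` is antitone on `(0, 1]`. Hence
`W_n(S) ≤ τ^{S r ln d} = d^{S r ln τ}`, while `B_n(S) ≤ 2^n d^{-S}`, so every term is at most
`2^n d^{-η₂ (1 - r ln τ) n}`. As `r ln τ < 1`, the at most `n + 1 ≤ 2^n` terms sum to at most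
`(4 d^{-η₂ (1 - r ln τ)})^n`, and the base tends to `0`.
-/

open Real

namespace Real

variable {τ : ℝ}

lemma mul_sub_one_mul_rpow_le (hτ : 1 < τ) {x : ℝ} (hx0 : 0 ≤ x) (hx1 : x ≤ 1) :
    x * (τ - 1) * τ ^ x ≤ τ * (τ ^ x - 1) := by
  have hτ0 : 0 < τ := by linarith
  have bernoulli : τ ^ (1 - x) ≤ 1 + (1 - x) * (τ - 1) := by
    simpa using rpow_one_add_le_one_add_mul_self (s := τ - 1) (by linarith)
      (by linarith : 0 ≤ 1 - x) (by linarith)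
  have hsplit : τ ^ (1 - x) * τ ^ x = τ := by
    rw [← rpow_add hτ0, sub_add_cancel, rpow_one]
  nlinarith [mul_le_mul_of_nonneg_right bernoulli (rpow_nonneg hτ0.le x)]

lemma antitoneOn_log_rpow_sub_one_sub_mul_log (hτ : 1 < τ) {κ : ℝ}
    (hκ : τ * log τ / (τ - 1) ≤ κ) :
    AntitoneOn (fun x => log (τ ^ x - 1) - κ * log x) (Set.Ioc 0 1) := by
  have hτ0 : 0 < τ := by linarith
  have hlog : 0 < log τ := log_pos hτ
  have hκ' : τ * log τ ≤ κ * (τ - 1) := (div_le_iff₀ (by linarith)).1 hκ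
  have hderiv : ∀ x : ℝ, 0 < x → HasDerivAt (fun x => log (τ ^ x - 1) - κ * log x)
      (τ ^ x * log τ / (τ ^ x - 1) - κ * x⁻¹) x := fun x hx =>
    ((((hasStrictDerivAt_const_rpow hτ0 x).hasDerivAt).sub_const 1).log
      (sub_ne_zero.2 (one_lt_rpow hτ hx).ne')).sub ((hasDerivAt_log hx.ne').const_mul κ)
  refine antitoneOn_of_hasDerivWithinAt_nonpos (convex_Ioc 0 1)
    (fun x hx => (hderiv x hx.1).continuousAt.continuousWithinAt)
    (fun x hx => (hderiv x (interior_subset hx).1).hasDerivWithinAt) fun x hx => ?_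
  obtain ⟨hx0, hx1⟩ := interior_subset hx
  have hpow : 0 < τ ^ x - 1 := sub_pos.2 (one_lt_rpow hτ hx0)
  have hA := mul_sub_one_mul_rpow_le hτ hx0.le hx1
  -- `x τ^x log τ (τ - 1) ≤ τ (τ^x - 1) log τ ≤ κ (τ - 1) (τ^x - 1)`
  have hmain : x * τ ^ x * log τ ≤ κ * (τ ^ x - 1) := by
    refine le_of_mul_le_mul_right ?_ (by linarith : 0 < τ - 1)
    nlinarith [mul_le_mul_of_nonneg_right hA hlog.le, mul_le_mul_of_nonneg_right hκ' hpow.le]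
  rw [sub_nonpos, div_le_iff₀ hpow, mul_comm κ, mul_assoc, inv_mul_eq_div, le_div_iff₀ hx0]
  linarith

theorem sub_one_mul_rpow_le_rpow_sub_one (hτ : 1 < τ) {κ : ℝ} (hκ : τ * log τ / (τ - 1) ≤ κ)
    {s : ℝ} (hs0 : 0 < s) (hs1 : s ≤ 1) : (τ - 1) * s ^ κ ≤ τ ^ s - 1 := by
  have h := antitoneOn_log_rpow_sub_one_sub_mul_log hτ hκ ⟨hs0, hs1⟩ ⟨one_pos, le_rfl⟩ hs1
  simp only [rpow_one, log_one, mul_zero, sub_zero] at h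
  have hpow : 0 < τ ^ s - 1 := sub_pos.2 (one_lt_rpow hτ hs0)
  have hτ1 : 0 < τ - 1 := by linarith
  rw [← log_le_log_iff (by positivity) hpow, log_mul hτ1.ne' (rpow_pos_of_pos hs0 κ).ne',
    log_rpow hs0]
  linarith

end Real

lemma tendsto_pow_self_of_tendsto_zero {u : ℕ → ℝ} (hu : Tendsto u atTop (nhds 0)) :
    Tendsto (fun n => u n ^ n) atTop (nhds 0) := by
  have hsmall : ∀ᶠ n in atTop, ‖u n‖ ≤ 1 / 2 :=
    (tendsto_zero_iff_norm_tendsto_zero.1 hu).eventually (ge_mem_nhds (by norm_num))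
  refine squeeze_zero_norm' ?_ (tendsto_pow_atTop_nhds_zero_of_lt_one (r := (1 / 2 : ℝ))
    (by norm_num) (by norm_num))
  filter_upwards [hsmall] with n hn
  rw [norm_pow]
  exact pow_le_pow_left₀ (norm_nonneg _) hn n

lemma mul_le_and_le_of_mem_Icc_ceil_floor {n S : ℕ} {η₂ η₃ : ℝ} (hη₃ : η₃ ≤ 1)
    (hS : S ∈ Icc ⌈(n : ℝ) * η₂⌉₊ ⌊(n : ℝ) * η₃⌋₊) : (n : ℝ) * η₂ ≤ S ∧ S ≤ n := by
  obtain ⟨h₂, h₃⟩ := Finset.mem_Icc.1 hS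
  exact ⟨Nat.ceil_le.1 h₂,
    h₃.trans (Nat.floor_le_of_le (mul_le_of_le_one_right n.cast_nonneg hη₃))⟩

section ModelRB

variable {α p r : ℝ} {k n : ℕ}

lemma one_le_fRB (hp0 : 0 ≤ p) (hp1 : p < 1) (hd : 1 ≤ dRB α n) {s : ℝ}
    (hs : 1 / dRB α n ≤ s) : 1 ≤ fRB α p k n s := by
  have hε : dRB α n ^ (-(k : ℝ)) ≤ s ^ k := by
    rw [rpow_neg (by linarith), rpow_natCast, ← inv_pow, ← one_div]
    exact pow_le_pow_left₀ (by positivity) hs k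
  have hε1 : dRB α n ^ (-(k : ℝ)) ≤ 1 :=
    rpow_le_one_of_one_le_of_nonpos hd (by simp)
  have ha : 0 ≤ p / (1 - p) := div_nonneg hp0 (by linarith)
  have hterm :
      0 ≤ p / (1 - p) * (s ^ k - dRB α n ^ (-(k : ℝ))) / (1 - dRB α n ^ (-(k : ℝ))) := by
    apply div_nonneg <;> nlinarith
  rw [fRB]
  linarith

lemma fRB_le (hp0 : 0 ≤ p) (hp1 : p < 1) (hd : 1 ≤ dRB α n) {s : ℝ} (hs0 : 0 ≤ s)
    (hs1 : s ≤ 1) : fRB α p k n s ≤ 1 + p / (1 - p) * s ^ k := by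
  have hε0 : 0 ≤ dRB α n ^ (-(k : ℝ)) := rpow_nonneg (by linarith) _
  have hε1 : dRB α n ^ (-(k : ℝ)) ≤ 1 :=
    rpow_le_one_of_one_le_of_nonpos hd (by simp)
  have ha : 0 ≤ p / (1 - p) := div_nonneg hp0 (by linarith)
  have hsk : s ^ k ≤ 1 := pow_le_one₀ hs0 hs1
  rw [fRB, add_le_add_iff_left]
  refine div_le_of_le_mul₀ (by linarith) (by positivity) ?_
  nlinarith [mul_nonneg ha hε0]

lemma fRB_le_rpow {τ : ℝ} (hp0 : 0 < p) (hp1 : p < 1) (hτ : τ = 1 / (1 - p))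
    (hk : τ * log τ / (τ - 1) ≤ k) (hd : 1 ≤ dRB α n) {s : ℝ} (hs0 : 0 < s) (hs1 : s ≤ 1) :
    fRB α p k n s ≤ τ ^ s := by
  have hp1' : 0 < 1 - p := sub_pos.2 hp1
  have hτp : p / (1 - p) = τ - 1 := by
    rw [hτ]; field_simp; ring
  have hτ1 : 1 < τ := by
    rw [hτ, lt_div_iff₀ hp1']; linarith
  have hkey := sub_one_mul_rpow_le_rpow_sub_one hτ1 hk hs0 hs1
  have hf := fRB_le (k := k) hp0.le hp1 hd hs0.le hs1
  rw [rpow_natCast] at hkey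
  rw [hτp] at hf
  linarith

lemma WRB_le_rpow {τ : ℝ} (hp0 : 0 < p) (hp1 : p < 1) (hτ : τ = 1 / (1 - p))
    (hk : τ * log τ / (τ - 1) ≤ k) (hr : 0 ≤ r) (hd : 1 ≤ dRB α n) {S : ℕ}
    (hS : 1 / dRB α n ≤ S / n) (hSn : S ≤ n) :
    WRB α p r k n S ≤ τ ^ (S / n * (r * mRB α n)) := by
  have hs0 : 0 < (S : ℝ) / n := lt_of_lt_of_le (by positivity) hS
  have hs1 : (S : ℝ) / n ≤ 1 := div_le_one_of_le₀ (by exact_mod_cast hSn) n.cast_nonneg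
  have hm : 0 ≤ r * mRB α n := mul_nonneg hr (mul_nonneg n.cast_nonneg (log_nonneg hd))
  rw [WRB, rpow_mul (x := τ) (by rw [hτ]; have := sub_pos.2 hp1; positivity)]
  exact rpow_le_rpow (by linarith [one_le_fRB (k := k) hp0.le hp1 hd hS])
    (fRB_le_rpow hp0 hp1 hτ hk hd hs0 hs1) hm

lemma BRB_le (hd : 1 ≤ dRB α n) (S : ℕ) : BRB α n S ≤ 2 ^ n * (1 / dRB α n) ^ S := by
  have h1 : 0 ≤ 1 - 1 / dRB α n := sub_nonneg.2 ((div_le_one (by linarith)).2 hd)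
  have h2 : 1 - 1 / dRB α n ≤ 1 := sub_le_self _ (by positivity)
  calc BRB α n S ≤ 2 ^ n * (1 / dRB α n) ^ S * 1 := by
        rw [BRB]
        gcongr
        · exact_mod_cast n.choose_le_two_pow S
        · exact pow_le_one₀ h1 h2
    _ = 2 ^ n * (1 / dRB α n) ^ S := mul_one _

lemma PhiRB_nonneg (hp0 : 0 ≤ p) (hp1 : p < 1) (hd : 1 ≤ dRB α n) {S : ℕ}
    (hS : 1 / dRB α n ≤ S / n) : 0 ≤ PhiRB α p r k n S := by
  have h1 : 0 ≤ 1 - 1 / dRB α n := sub_nonneg.2 ((div_le_one (by linarith)).2 hd)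
  have hf := one_le_fRB (k := k) hp0 hp1 hd hS
  exact mul_nonneg (by rw [BRB]; positivity) (rpow_nonneg (by linarith) _)

lemma PhiRB_le {τ η : ℝ} (hp0 : 0 < p) (hp1 : p < 1) (hτ : τ = 1 / (1 - p))
    (hk : τ * log τ / (τ - 1) ≤ k) (hr : 0 ≤ r) (hrτ : r * log τ ≤ 1) (hn : n ≠ 0)
    (hd : 1 ≤ dRB α n) (hη : 1 / dRB α n ≤ η) {S : ℕ} (hSη : n * η ≤ S) (hSn : S ≤ n) :
    PhiRB α p r k n S ≤ 2 ^ n * exp (-(η * (1 - r * log τ)) * log (dRB α n)) ^ n := by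
  have hn0 : (0 : ℝ) < n := by positivity
  have hτ0 : 0 < τ := by rw [hτ]; have := sub_pos.2 hp1; positivity
  have hS : 1 / dRB α n ≤ S / n := hη.trans ((le_div_iff₀ hn0).2 (by linarith))
  have hdexp : 1 / dRB α n = exp (-log (dRB α n)) := by
    rw [exp_neg, exp_log (by linarith), one_div]
  have hlog : 0 ≤ log (dRB α n) := log_nonneg hd
  calc PhiRB α p r k n S
      ≤ 2 ^ n * (1 / dRB α n) ^ S * τ ^ (S / n * (r * mRB α n)) :=
        mul_le_mul (BRB_le hd S) (WRB_le_rpow hp0 hp1 hτ hk hr hd hS hSn)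
          (rpow_nonneg (by linarith [one_le_fRB (k := k) hp0.le hp1 hd hS]) _) (by positivity)
    _ = 2 ^ n * exp (-((1 - r * log τ) * S * log (dRB α n))) := by
        rw [hdexp, ← exp_nat_mul, rpow_def_of_pos hτ0, mRB, mul_assoc, ← exp_add]
        congr 2
        field_simp
        ring
    _ ≤ 2 ^ n * exp (-(η * (1 - r * log τ)) * log (dRB α n)) ^ n := by
        rw [← exp_nat_mul]
        gcongr
        nlinarith [mul_nonneg (mul_nonneg (sub_nonneg.2 hrτ) hlog) (sub_nonneg.2 hSη)]

lemma sum_PhiRB_Icc_nonneg {η₂ η₃ : ℝ} (hp0 : 0 ≤ p) (hp1 : p < 1) (hη₃ : η₃ ≤ 1) (hn : n ≠ 0)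
    (hd : 1 ≤ dRB α n) (hη₂ : 1 / dRB α n ≤ η₂) :
    0 ≤ ∑ S ∈ Icc ⌈(n : ℝ) * η₂⌉₊ ⌊(n : ℝ) * η₃⌋₊, PhiRB α p r k n S := by
  refine sum_nonneg fun S hS => PhiRB_nonneg hp0 hp1 hd (hη₂.trans ?_)
  rw [le_div_iff₀ (by positivity)]
  linarith [(mul_le_and_le_of_mem_Icc_ceil_floor hη₃ hS).1]

lemma sum_PhiRB_Icc_le {τ η₂ η₃ : ℝ} (hp0 : 0 < p) (hp1 : p < 1) (hτ : τ = 1 / (1 - p))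
    (hk : τ * log τ / (τ - 1) ≤ k) (hr : 0 ≤ r) (hrτ : r * log τ ≤ 1) (hη₃ : η₃ ≤ 1)
    (hn : n ≠ 0) (hd : 1 ≤ dRB α n) (hη₂ : 1 / dRB α n ≤ η₂) :
    ∑ S ∈ Icc ⌈(n : ℝ) * η₂⌉₊ ⌊(n : ℝ) * η₃⌋₊, PhiRB α p r k n S ≤
      (4 * exp (-(η₂ * (1 - r * log τ)) * log (dRB α n))) ^ n := by
  set q := exp (-(η₂ * (1 - r * log τ)) * log (dRB α n))
  have hcard : ((Icc ⌈(n : ℝ) * η₂⌉₊ ⌊(n : ℝ) * η₃⌋₊).card : ℝ) ≤ 2 ^ n := by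
    have hfloor : ⌊(n : ℝ) * η₃⌋₊ ≤ n :=
      Nat.floor_le_of_le (mul_le_of_le_one_right n.cast_nonneg hη₃)
    have hle : (Icc ⌈(n : ℝ) * η₂⌉₊ ⌊(n : ℝ) * η₃⌋₊).card ≤ 2 ^ n := by
      have hn2 := n.lt_two_pow_self
      rw [Nat.card_Icc]
      omega
    exact_mod_cast hle
  calc ∑ S ∈ Icc ⌈(n : ℝ) * η₂⌉₊ ⌊(n : ℝ) * η₃⌋₊, PhiRB α p r k n S
      ≤ (Icc ⌈(n : ℝ) * η₂⌉₊ ⌊(n : ℝ) * η₃⌋₊).card • (2 ^ n * q ^ n) :=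
        sum_le_card_nsmul _ _ _ fun S hS =>
          have hS' := mul_le_and_le_of_mem_Icc_ceil_floor hη₃ hS
          PhiRB_le hp0 hp1 hτ hk hr hrτ hn hd hη₂ hS'.1 hS'.2
    _ ≤ 2 ^ n * (2 ^ n * q ^ n) := by
        rw [nsmul_eq_mul]; gcongr
    _ = (4 * q) ^ n := by
        rw [mul_pow, ← mul_assoc, ← mul_pow]; norm_num

end ModelRB

theorem stmt12_general (α p r τ η₂ η₃ : ℝ) (k : ℕ) (hα : 0 < α)
    (hp0 : 0 < p) (hp1 : p < 1) (hτ : τ = 1 / (1 - p))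
    (hkτ : (k : ℝ) ≥ τ * Real.log τ / (τ - 1))
    (hr0 : 0 < r) (hr : r < 1 / Real.log τ)
    (hη₂ : 0 < η₂) (hη₃ : η₃ < 1) :
    Filter.Tendsto
      (fun n : ℕ => ∑ S ∈ Finset.Icc ⌈(n : ℝ) * η₂⌉₊ ⌊(n : ℝ) * η₃⌋₊, PhiRB α p r k n S)
      Filter.atTop (nhds 0) := by
  have hτ1 : 1 < τ := by
    rw [hτ, lt_div_iff₀ (sub_pos.2 hp1)]; linarith
  have hrτ : r * log τ < 1 := (lt_div_iff₀ (log_pos hτ1)).1 hr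
  have hd : Tendsto (dRB α) atTop atTop :=
    (tendsto_rpow_atTop hα).comp tendsto_natCast_atTop_atTop
  have hq : Tendsto (fun n => 4 * exp (-(η₂ * (1 - r * log τ)) * log (dRB α n))) atTop
      (nhds 0) := by
    have hc : -(η₂ * (1 - r * log τ)) < 0 := neg_lt_zero.2 (mul_pos hη₂ (by linarith))
    simpa using ((tendsto_exp_atBot.comp
      ((tendsto_log_atTop.comp hd).const_mul_atTop_of_neg hc)).const_mul 4)
  have hlarge : ∀ᶠ n : ℕ in atTop, n ≠ 0 ∧ 1 ≤ dRB α n ∧ 1 / dRB α n ≤ η₂ := by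
    filter_upwards [eventually_ne_atTop 0, hd.eventually_ge_atTop 1,
      hd.eventually_ge_atTop (1 / η₂)] with n hn hd1 hdη
    exact ⟨hn, hd1, (one_div_le (by linarith) hη₂).2 hdη⟩
  refine squeeze_zero' ?_ ?_ (tendsto_pow_self_of_tendsto_zero hq)
  · filter_upwards [hlarge] with n ⟨hn, hd1, hdη⟩
    exact sum_PhiRB_Icc_nonneg hp0.le hp1 hη₃.le hn hd1 hdη
  · filter_upwards [hlarge] with n ⟨hn, hd1, hdη⟩
    exact sum_PhiRB_Icc_le hp0 hp1 hτ hkτ hr0.le hrτ.le hη₃.le hn hd1 hdη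

/-- if k ≥ τ ln τ/(τ-1), 0 < r < 1/ln τ and 0 < η₂ < η₃ < 1, then
∑_{S=⌈nη₂⌉}^{⌊nη₃⌋} Φ_n(S) → 0. -/
theorem stmt12 (α p r τ η₂ η₃ : ℝ) (k : ℕ) (hα : 0 < α) (hk : 2 ≤ k)
    (hp0 : 0 < p) (hp1 : p < 1) (hτ : τ = 1 / (1 - p))
    (hkτ : (k : ℝ) ≥ τ * Real.log τ / (τ - 1))
    (hr0 : 0 < r) (hr : r < 1 / Real.log τ)
    (hη₂ : 0 < η₂) (hη₂₃ : η₂ < η₃) (hη₃ : η₃ < 1) :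
    Filter.Tendsto
      (fun n : ℕ => ∑ S ∈ Finset.Icc ⌈(n : ℝ) * η₂⌉₊ ⌊(n : ℝ) * η₃⌋₊, PhiRB α p r k n S)
      Filter.atTop (nhds 0) :=
  stmt12_general α p r τ η₂ η₃ k hα hp0 hp1 hτ hkτ hr0 hr hη₂ hη₃
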